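/- arXiv:quant-ph/0111077 — 4 statements merged into one kernel-verified Lean document; each statement's English description precedes it below -/
import Mathlib

section
/- For any one-qubit unitary U and i ∈ {1,2,3}, |U_0⟩⟨U_0| + |U_i⟩⟨U_i| = (I⊗I + γ_i (σ_i ⊗ Uσ_iU†))/2, where (γ_1,γ_2,γ_3)=(1,−1,1). -/
open Matrix Kronecker

noncomputable section

def σ1 : Matrix (Fin 2) (Fin 2) ℂ := !![0, 1; 1, 0]
def σ2 : Matrix (Fin 2) (Fin 2) ℂ := !![0, -Complex.I; Complex.I, 0]
def σ3 : Matrix (Fin 2) (Fin 2) ℂ := !![1, 0; 0, -1]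
def pauli : Fin 4 → Matrix (Fin 2) (Fin 2) ℂ := ![1, σ1, σ2, σ3]

/-- |EPR⟩ = (|00⟩ + |11⟩)/√2 -/
def EPR : Fin 2 × Fin 2 → ℂ := fun p => if p.1 = p.2 then (Real.sqrt 2)⁻¹ else 0

/-- |U_j⟩ = (I ⊗ U σ_j)|EPR⟩ -/
def ketU (U : Matrix (Fin 2) (Fin 2) ℂ) (j : Fin 4) : Fin 2 × Fin 2 → ℂ :=
  ((1 : Matrix (Fin 2) (Fin 2) ℂ) ⊗ₖ (U * pauli j)).mulVec EPR

/-- |U_j⟩⟨U_j| -/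
def projU (U : Matrix (Fin 2) (Fin 2) ℂ) (j : Fin 4) :
    Matrix (Fin 2 × Fin 2) (Fin 2 × Fin 2) ℂ :=
  Matrix.vecMulVec (ketU U j) (fun p => starRingEnd ℂ (ketU U j p))

/-- (γ_1, γ_2, γ_3) = (1, -1, 1) -/
def γ : Fin 4 → ℂ := ![1, 1, -1, 1]

lemma hs2 : (((Real.sqrt 2 : ℝ) : ℂ)⁻¹)^2 = (2:ℂ)⁻¹ := by
  rw [sq, ← mul_inv, ← Complex.ofReal_mul, Real.mul_self_sqrt (by norm_num : (0:ℝ) ≤ 2)]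
  norm_num

set_option maxHeartbeats 2000000 in
theorem projU_sum (U : Matrix (Fin 2) (Fin 2) ℂ)
    (hU : U ∈ Matrix.unitaryGroup (Fin 2) ℂ) (i : Fin 4) (hi : i ≠ 0) :
    projU U 0 + projU U i
      = (1 / 2 : ℂ) • (1 + γ i • (pauli i ⊗ₖ (U * pauli i * Uᴴ))) := by
  have hU' : U * Uᴴ = 1 := Matrix.mem_unitaryGroup_iff.mp hU
  have h := fun a b => congrFun (congrFun hU' a) b
  simp only [Matrix.mul_apply, Matrix.conjTranspose_apply, Fin.sum_univ_two,
    Matrix.one_apply] at h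
  have h00 := h 0 0; have h01 := h 0 1; have h10 := h 1 0; have h11 := h 1 1
  simp at h00 h01 h10 h11
  fin_cases i
  · exact absurd rfl hi
  all_goals {
    ext ⟨a,b⟩ ⟨c,d⟩
    fin_cases a <;> fin_cases b <;> fin_cases c <;> fin_cases d <;>
    · simp [projU, ketU, EPR, pauli, γ, σ1, σ2, σ3, Matrix.mulVec, Matrix.mul_apply,
        Matrix.vecMulVec_apply, Matrix.one_apply, Fin.sum_univ_two, dotProduct,
        Matrix.kroneckerMap_apply, Matrix.smul_apply, Matrix.add_apply, _root_.map_mul,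
        Fintype.sum_prod_type, Prod.mk.injEq, Prod.ext_iff, Prod.fst_zero, Prod.snd_zero,
        Complex.conj_ofReal]
      all_goals try ring_nf
      all_goals try simp only [hs2, Complex.I_sq]
      all_goals first
      | linear_combination (0 : ℂ) * h00
      | linear_combination (1/2 : ℂ) * h00
      | linear_combination (1/2 : ℂ) * h11
      | linear_combination (1/2 : ℂ) * h01
      | linear_combination (1/2 : ℂ) * h10
  }
end
end

section
/- With Q_j (for j ∈ {0,1,2,3}) defined as projectors on four qubits by Q_j = (I_{12} ⊗ U_{34})(|B_j⟩⟨B_j|_{13} ⊗ I_{24})(I_{12} ⊗ U†_{34}) where U is the C-NOT gate, one has Q_0 + Q_1 = I_2 ⊗ (I_{134} + (σ_1⊗σ_1⊗σ_1)_{134})/2. -/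
open Matrix Kronecker

noncomputable section

/-- Bell states |B_j⟩ = (I ⊗ σ_j)|EPR⟩ -/
def bell (j : Fin 4) : Fin 2 × Fin 2 → ℂ :=
  ((1 : Matrix (Fin 2) (Fin 2) ℂ) ⊗ₖ pauli j).mulVec EPR

/-- |B_j⟩⟨B_j| -/
def bellProj (j : Fin 4) : Matrix (Fin 2 × Fin 2) (Fin 2 × Fin 2) ℂ :=
  Matrix.vecMulVec (bell j) (fun p => starRingEnd ℂ (bell j p))

/-- The C-NOT gate: U|ab⟩ = |a⟩|a⊕b⟩. -/
def CNOT : Matrix (Fin 2 × Fin 2) (Fin 2 × Fin 2) ℂ :=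
  fun p q => if p.1 = q.1 ∧ p.2 = q.1 + q.2 then 1 else 0

/-- State space index for qubits 1,2,3,4. -/
abbrev Q4 := Fin 2 × Fin 2 × Fin 2 × Fin 2

/-- Embed a two-qubit operator, acting on qubits 1 and 3, into the four-qubit space. -/
def on13 (M : Matrix (Fin 2 × Fin 2) (Fin 2 × Fin 2) ℂ) : Matrix Q4 Q4 ℂ :=
  fun a b => M (a.1, a.2.2.1) (b.1, b.2.2.1) *
    (if a.2.1 = b.2.1 ∧ a.2.2.2 = b.2.2.2 then 1 else 0)

/-- Embed a two-qubit operator, acting on qubits 2 and 4, into the four-qubit space. -/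
def on24 (M : Matrix (Fin 2 × Fin 2) (Fin 2 × Fin 2) ℂ) : Matrix Q4 Q4 ℂ :=
  fun a b => M (a.2.1, a.2.2.2) (b.2.1, b.2.2.2) *
    (if a.1 = b.1 ∧ a.2.2.1 = b.2.2.1 then 1 else 0)

/-- Embed a two-qubit operator, acting on qubits 3 and 4, into the four-qubit space. -/
def on34 (M : Matrix (Fin 2 × Fin 2) (Fin 2 × Fin 2) ℂ) : Matrix Q4 Q4 ℂ :=
  fun a b => M (a.2.2.1, a.2.2.2) (b.2.2.1, b.2.2.2) *
    (if a.1 = b.1 ∧ a.2.1 = b.2.1 then 1 else 0)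

/-- Embed a three-qubit operator, acting on qubits 1, 3 and 4, into the four-qubit space. -/
def on134 (M : Matrix (Fin 2 × Fin 2 × Fin 2) (Fin 2 × Fin 2 × Fin 2) ℂ) : Matrix Q4 Q4 ℂ :=
  fun a b => M (a.1, a.2.2.1, a.2.2.2) (b.1, b.2.2.1, b.2.2.2) *
    (if a.2.1 = b.2.1 then 1 else 0)

/-- Embed a three-qubit operator, acting on qubits 2, 3 and 4, into the four-qubit space. -/
def on234 (M : Matrix (Fin 2 × Fin 2 × Fin 2) (Fin 2 × Fin 2 × Fin 2) ℂ) : Matrix Q4 Q4 ℂ :=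
  fun a b => M (a.2.1, a.2.2.1, a.2.2.2) (b.2.1, b.2.2.1, b.2.2.2) *
    (if a.1 = b.1 then 1 else 0)

/-- Q_j = (I₁₂ ⊗ U₃₄)(|B_j⟩⟨B_j|₁₃ ⊗ I₂₄)(I₁₂ ⊗ U†₃₄), U the C-NOT gate. -/
def Qop (j : Fin 4) : Matrix Q4 Q4 ℂ :=
  on34 CNOT * on13 (bellProj j) * on34 CNOTᴴ

/-- R_k = I₁ ⊗ (I₂ ⊗ U₃₄)(I₃ ⊗ |B_k⟩⟨B_k|₂₄)(I₂ ⊗ U†₃₄), U the C-NOT gate. -/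
def Rop (k : Fin 4) : Matrix Q4 Q4 ℂ :=
  on34 CNOT * on24 (bellProj k) * on34 CNOTᴴ

lemma hs' : ((Real.sqrt 2 : ℝ) : ℂ)⁻¹ * ((Real.sqrt 2 : ℝ) : ℂ)⁻¹ = 1/2 := by
  rw [← mul_inv]
  norm_num [← Complex.ofReal_mul, Real.mul_self_sqrt]

lemma bell_key : bellProj 0 + bellProj 1 = (1/2 : ℂ) • (1 + σ1 ⊗ₖ σ1) := by
  ext ⟨a1,a3⟩ ⟨b1,b3⟩
  fin_cases a1 <;> fin_cases a3 <;> fin_cases b1 <;> fin_cases b3 <;>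
    simp [bellProj, bell, EPR, pauli, σ1, Matrix.vecMulVec, Matrix.mulVec, dotProduct,
      Fintype.sum_prod_type, Fin.sum_univ_two, Matrix.one_apply, Prod.ext_iff, hs']

lemma on13_add (M N : Matrix (Fin 2 × Fin 2) (Fin 2 × Fin 2) ℂ) :
    on13 (M + N) = on13 M + on13 N := by
  ext a b; simp [on13, add_mul, ite_add_ite]

lemma cnot_mul (M : Matrix Q4 Q4 ℂ) (a b : Q4) :
    (on34 CNOT * M) a b = M (a.1, a.2.1, a.2.2.1, a.2.2.1 + a.2.2.2) b := by
  obtain ⟨a1,a2,a3,a4⟩ := a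
  fin_cases a1 <;> fin_cases a2 <;> fin_cases a3 <;> fin_cases a4 <;>
    simp [Matrix.mul_apply, on34, CNOT, Fintype.sum_prod_type, Fin.sum_univ_two]

lemma mul_cnotH (M : Matrix Q4 Q4 ℂ) (a b : Q4) :
    (M * on34 CNOTᴴ) a b = M a (b.1, b.2.1, b.2.2.1, b.2.2.1 + b.2.2.2) := by
  obtain ⟨b1,b2,b3,b4⟩ := b
  fin_cases b1 <;> fin_cases b2 <;> fin_cases b3 <;> fin_cases b4 <;>
    simp [Matrix.mul_apply, on34, CNOT, Matrix.conjTranspose_apply,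
      Fintype.sum_prod_type, Fin.sum_univ_two]

set_option maxHeartbeats 4000000 in
theorem Q0_add_Q1 :
    Qop 0 + Qop 1
      = on134 ((1 / 2 : ℂ) • (1 + σ1 ⊗ₖ (σ1 ⊗ₖ σ1))) := by
  have h : Qop 0 + Qop 1 = on34 CNOT * on13 (bellProj 0 + bellProj 1) * on34 CNOTᴴ := by
    simp only [Qop, on13_add, Matrix.mul_add, Matrix.add_mul]
  rw [h, bell_key]
  ext a b
  rw [mul_cnotH, cnot_mul]
  obtain ⟨a1,a2,a3,a4⟩ := a
  obtain ⟨b1,b2,b3,b4⟩ := b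
  fin_cases a1 <;> fin_cases a2 <;> fin_cases a3 <;> fin_cases a4 <;>
    fin_cases b1 <;> fin_cases b2 <;> fin_cases b3 <;> fin_cases b4 <;>
    simp [on13, on134, σ1, Matrix.one_apply, Prod.ext_iff]
end
end

section
/- With Q_j defined as Q_j = (I_{12} ⊗ U_{34})(|B_j⟩⟨B_j|_{13} ⊗ I_{24})(I_{12} ⊗ U†_{34}) where U is the C-NOT gate, one has Q_0 + Q_3 = I_{24} ⊗ (|B_0⟩⟨B_0| + |B_3⟩⟨B_3|)_{13}. -/
open Matrix Kronecker

noncomputable section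

def Pproj : Matrix (Fin 2 × Fin 2) (Fin 2 × Fin 2) ℂ :=
  fun p q => if p = q ∧ p.1 = p.2 then 1 else 0

lemma sqrt2_inv_sq : ((Real.sqrt 2 : ℂ))⁻¹ * ((Real.sqrt 2 : ℂ))⁻¹ = 1/2 := by
  rw [← mul_inv]
  norm_num [← Complex.ofReal_mul, Real.mul_self_sqrt]

lemma bellProj_sum : bellProj 0 + bellProj 3 = Pproj := by
  have h2 := sqrt2_inv_sq
  ext ⟨a,b⟩ ⟨c,d⟩
  fin_cases a <;> fin_cases b <;> fin_cases c <;> fin_cases d <;>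
    simp [bellProj, bell, Pproj, EPR, pauli, σ1, σ2, σ3, Matrix.mulVec,
      dotProduct, Matrix.vecMulVec, Fintype.sum_prod_type,
      Fin.sum_univ_succ, Matrix.kroneckerMap_apply, Matrix.one_apply,
      Prod.ext_iff, h2] <;> ring_nf

/-- Image of a basis state under the CNOT on qubits 3,4. -/
def cf (a : Q4) : Q4 := (a.1, a.2.1, a.2.2.1, a.2.2.1 + a.2.2.2)

lemma on34C_apply (a c : Q4) :
    on34 CNOT a c = if c = cf a then 1 else 0 := by
  obtain ⟨a1,a2,a3,a4⟩ := a; obtain ⟨c1,c2,c3,c4⟩ := c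
  simp only [on34, CNOT, cf, Prod.mk.injEq]
  fin_cases a3 <;> fin_cases a4 <;> fin_cases c3 <;> fin_cases c4 <;>
    simp [and_comm, and_left_comm, and_assoc, eq_comm]

lemma mulC (M : Matrix Q4 Q4 ℂ) (a b : Q4) :
    (on34 CNOT * M) a b = M (cf a) b := by
  simp [Matrix.mul_apply, on34C_apply, ite_mul, Finset.sum_ite_eq]

lemma on34CH_apply (c b : Q4) :
    on34 CNOTᴴ c b = if c = cf b then 1 else 0 := by
  obtain ⟨b1,b2,b3,b4⟩ := b; obtain ⟨c1,c2,c3,c4⟩ := c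
  simp only [on34, CNOT, cf, Matrix.conjTranspose_apply, Prod.mk.injEq]
  fin_cases b3 <;> fin_cases b4 <;> fin_cases c3 <;> fin_cases c4 <;>
    simp [and_comm, and_left_comm, and_assoc, eq_comm]

lemma mulCH (M : Matrix Q4 Q4 ℂ) (a b : Q4) :
    (M * on34 CNOTᴴ) a b = M a (cf b) := by
  simp [Matrix.mul_apply, on34CH_apply, mul_ite, Finset.sum_ite_eq']

lemma key : on34 CNOT * on13 Pproj * on34 CNOTᴴ = on13 Pproj := by
  ext a b
  rw [mulCH, mulC]
  obtain ⟨a1,a2,a3,a4⟩ := a; obtain ⟨b1,b2,b3,b4⟩ := b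
  fin_cases a1 <;> fin_cases a3 <;> fin_cases a4 <;>
    fin_cases b1 <;> fin_cases b3 <;> fin_cases b4 <;>
    simp [on13, Pproj, cf, Prod.ext_iff]

theorem Q0_add_Q3 :
    Qop 0 + Qop 3 = on13 (bellProj 0 + bellProj 3) := by
  have hadd : ∀ (A B : Matrix (Fin 2 × Fin 2) (Fin 2 × Fin 2) ℂ),
      on13 (A + B) = on13 A + on13 B := by
    intro A B; ext a b
    simp only [on13, Matrix.add_apply]
    split_ifs <;> ring
  have h1 : on13 (bellProj 0) + on13 (bellProj 3) = on13 Pproj := by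
    rw [← hadd, bellProj_sum]
  rw [bellProj_sum]
  calc Qop 0 + Qop 3
      = on34 CNOT * (on13 (bellProj 0) + on13 (bellProj 3)) * on34 CNOTᴴ := by
        simp [Qop, Matrix.mul_add, Matrix.add_mul]
    _ = on13 Pproj := by rw [h1, key]
end
end

section
/- With R_k as above, R_0 + R_3 = I_1 ⊗ [ |0⟩⟨0|_3 ⊗ (|B_0⟩⟨B_0| + |B_3⟩⟨B_3|)_{24} + |1⟩⟨1|_3 ⊗ (|B_1⟩⟨B_1| + |B_2⟩⟨B_2|)_{24} ], and this operator equals (I + σ_3⊗σ_3⊗σ_3)/2 acting on qubits 2, 3, 4 (tensored with I_1), i.e., the projector onto even parity in the computational basis of qubits 2, 3, 4. -/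
/-! Conjugation by the C-NOT gate on qubits 3, 4 merely relabels the computational basis by
`(a₃, a₄) ↦ (a₃, a₃ + a₄)`. Since `|B₀⟩⟨B₀| + |B₃⟩⟨B₃|` is the diagonal projector onto
`span {|00⟩, |11⟩}` (and `|B₁⟩⟨B₁| + |B₂⟩⟨B₂|` the one onto `span {|01⟩, |10⟩}`), `R₀ + R₃` is
diagonal with entry `1` at `a` exactly when `a₂ = a₃ + a₄`, i.e. when `a₂ + a₃ + a₄` is even. The
other two operators are diagonal as well, with the same entries. -/

open Matrix Kronecker

noncomputable section

/-- I₁ ⊗ |c⟩⟨c|₃ ⊗ M₂₄ on the four-qubit space. -/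
def mix4 (c : Fin 2) (M : Matrix (Fin 2 × Fin 2) (Fin 2 × Fin 2) ℂ) : Matrix Q4 Q4 ℂ :=
  fun a b => (if a.1 = b.1 then 1 else 0) *
    (if a.2.2.1 = c then 1 else 0) * (if b.2.2.1 = c then 1 else 0) *
    M (a.2.1, a.2.2.2) (b.2.1, b.2.2.2)

/-- I₁ tensored with the projector onto even parity of qubits 2, 3, 4
in the computational basis. -/
def evenParity234 : Matrix Q4 Q4 ℂ :=
  fun a b => if a = b ∧ a.2.1 + a.2.2.1 + a.2.2.2 = 0 then 1 else 0

lemma Matrix.permMatrix_mul_mul_permMatrix_inv {n R : Type*} [Fintype n] [DecidableEq n]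
    [NonAssocSemiring R] (σ : Equiv.Perm n) (M : Matrix n n R) :
    σ.permMatrix R * M * (σ⁻¹).permMatrix R = M.submatrix σ σ := by
  rw [PEquiv.toMatrix_toPEquiv_mul, PEquiv.mul_toMatrix_toPEquiv, submatrix_submatrix,
    Equiv.Perm.inv_def, Equiv.symm_symm]
  rfl

def cnotPerm : Equiv.Perm (Fin 2 × Fin 2) :=
  Equiv.prodShear (Equiv.refl _) Equiv.addLeft

lemma CNOT_eq_permMatrix : CNOT = cnotPerm.permMatrix ℂ := by
  ext ⟨p₁, p₂⟩ ⟨q₁, q₂⟩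
  simp only [CNOT, PEquiv.toMatrix_apply, Equiv.toPEquiv_apply, Option.mem_some_iff, cnotPerm,
    Equiv.prodShear_apply, Equiv.refl_apply, Equiv.coe_addLeft, Prod.ext_iff]
  congr 1
  revert p₁ p₂ q₁ q₂
  decide

lemma on34_permMatrix (σ : Equiv.Perm (Fin 2 × Fin 2)) :
    on34 (σ.permMatrix ℂ) = Equiv.Perm.permMatrix ℂ
      ((Equiv.refl (Fin 2)).prodCongr ((Equiv.refl (Fin 2)).prodCongr σ)) := by
  ext ⟨a₁, a₂, a₃⟩ ⟨b₁, b₂, b₃⟩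
  simp [on34, Prod.ext_iff, ite_and]

def cnot34 : Equiv.Perm Q4 :=
  (Equiv.refl (Fin 2)).prodCongr ((Equiv.refl (Fin 2)).prodCongr cnotPerm)

lemma on34_CNOT_mul_mul_on34_conjTranspose_CNOT (M : Matrix Q4 Q4 ℂ) :
    on34 CNOT * M * on34 CNOTᴴ = M.submatrix cnot34 cnot34 := by
  have hinv : (Equiv.refl (Fin 2)).prodCongr ((Equiv.refl (Fin 2)).prodCongr cnotPerm⁻¹) =
      cnot34⁻¹ := rfl
  rw [CNOT_eq_permMatrix, conjTranspose_permMatrix, on34_permMatrix, on34_permMatrix, hinv]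
  exact permMatrix_mul_mul_permMatrix_inv cnot34 M

lemma on24_add (M N : Matrix (Fin 2 × Fin 2) (Fin 2 × Fin 2) ℂ) :
    on24 (M + N) = on24 M + on24 N := by
  ext a b
  simp only [on24, Matrix.add_apply, add_mul]

lemma on24_diagonal (d : Fin 2 × Fin 2 → ℂ) :
    on24 (diagonal d) = diagonal fun a => d (a.2.1, a.2.2.2) := by
  ext ⟨a₁, a₂, a₃, a₄⟩ ⟨b₁, b₂, b₃, b₄⟩
  by_cases h : a₁ = b₁ ∧ a₂ = b₂ ∧ a₃ = b₃ ∧ a₄ = b₄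
  · obtain ⟨rfl, rfl, rfl, rfl⟩ := h
    simp [on24]
  · simp [on24, diagonal_apply]
    aesop

lemma mix4_diagonal (c : Fin 2) (d : Fin 2 × Fin 2 → ℂ) :
    mix4 c (diagonal d) = diagonal fun a => if a.2.2.1 = c then d (a.2.1, a.2.2.2) else 0 := by
  ext ⟨a₁, a₂, a₃, a₄⟩ ⟨b₁, b₂, b₃, b₄⟩
  by_cases h : a₁ = b₁ ∧ a₂ = b₂ ∧ a₃ = b₃ ∧ a₄ = b₄
  · obtain ⟨rfl, rfl, rfl, rfl⟩ := h
    by_cases a₃ = c <;> simp [mix4, *]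
  · simp [mix4, diagonal_apply]
    aesop

lemma on234_diagonal (d : Fin 2 × Fin 2 × Fin 2 → ℂ) :
    on234 (diagonal d) = diagonal fun a => d a.2 := by
  ext ⟨a₁, a₂⟩ ⟨b₁, b₂⟩
  by_cases h : a₁ = b₁
  · subst h
    simp [on234, diagonal_apply]
  · simp [on234, diagonal_apply, h]

lemma bell_apply (j : Fin 4) (p : Fin 2 × Fin 2) :
    bell j p = (Real.sqrt 2 : ℂ)⁻¹ * pauli j p.2 p.1 := by
  simp [bell, mulVec, dotProduct, EPR, kroneckerMap_apply, one_apply, Fintype.sum_prod_type,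
    mul_comm]

lemma bellProj_apply (j : Fin 4) (p q : Fin 2 × Fin 2) :
    bellProj j p q = 2⁻¹ * (pauli j p.2 p.1 * star (pauli j q.2 q.1)) := by
  have half : (Real.sqrt 2 : ℂ)⁻¹ * (Real.sqrt 2 : ℂ)⁻¹ = 2⁻¹ := by
    rw [← mul_inv, ← Complex.ofReal_mul, Real.mul_self_sqrt zero_le_two, Complex.ofReal_ofNat]
  simp only [bellProj, vecMulVec_apply, bell_apply, map_mul, map_inv₀, Complex.conj_ofReal]
  rw [← half]
  simp only [RCLike.star_def]
  ring

lemma bellProj_zero_add_bellProj_three :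
    bellProj 0 + bellProj 3 = diagonal fun p => if p.1 = p.2 then 1 else 0 := by
  ext ⟨p₁, p₂⟩ ⟨q₁, q₂⟩
  simp only [Matrix.add_apply, bellProj_apply, diagonal_apply]
  fin_cases p₁ <;> fin_cases p₂ <;> fin_cases q₁ <;> fin_cases q₂ <;>
    simp [pauli, σ3] <;> norm_num

lemma bellProj_one_add_bellProj_two :
    bellProj 1 + bellProj 2 = diagonal fun p => if p.1 = p.2 then 0 else 1 := by
  ext ⟨p₁, p₂⟩ ⟨q₁, q₂⟩
  simp only [Matrix.add_apply, bellProj_apply, diagonal_apply]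
  fin_cases p₁ <;> fin_cases p₂ <;> fin_cases q₁ <;> fin_cases q₂ <;>
    simp [pauli, σ1, σ2] <;> norm_num

lemma evenParity234_eq_diagonal :
    evenParity234 = diagonal fun a => if a.2.1 + a.2.2.1 + a.2.2.2 = 0 then 1 else 0 := by
  ext a b
  by_cases h : a = b
  · subst h
    simp [evenParity234]
  · simp [evenParity234, h]

lemma Rop_zero_add_Rop_three : Rop 0 + Rop 3 = evenParity234 := by
  have hsum : Rop 0 + Rop 3 = (on24 (bellProj 0 + bellProj 3)).submatrix cnot34 cnot34 := by
    rw [Rop, Rop, on34_CNOT_mul_mul_on34_conjTranspose_CNOT,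
      on34_CNOT_mul_mul_on34_conjTranspose_CNOT, on24_add]
    rfl
  rw [hsum, bellProj_zero_add_bellProj_three, on24_diagonal, submatrix_diagonal_equiv,
    evenParity234_eq_diagonal]
  congr 1
  funext ⟨a₁, a₂, a₃, a₄⟩
  simp only [Function.comp_apply, cnot34, cnotPerm, Equiv.prodCongr_apply, Prod.map,
    Equiv.refl_apply, Equiv.prodShear_apply, Equiv.coe_addLeft]
  fin_cases a₂ <;> fin_cases a₃ <;> fin_cases a₄ <;> rfl

lemma mix4_bellProj_eq_evenParity234 :
    mix4 0 (bellProj 0 + bellProj 3) + mix4 1 (bellProj 1 + bellProj 2) = evenParity234 := by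
  rw [bellProj_zero_add_bellProj_three, bellProj_one_add_bellProj_two, mix4_diagonal,
    mix4_diagonal, diagonal_add, evenParity234_eq_diagonal]
  congr 1
  funext ⟨a₁, a₂, a₃, a₄⟩
  fin_cases a₂ <;> fin_cases a₃ <;> fin_cases a₄ <;> simp

lemma σ3_eq_diagonal : σ3 = diagonal ![1, -1] := by
  ext i j
  fin_cases i <;> fin_cases j <;> rfl

lemma on234_σ3_eq_evenParity234 :
    on234 ((1 / 2 : ℂ) • (1 + σ3 ⊗ₖ (σ3 ⊗ₖ σ3))) = evenParity234 := by
  rw [σ3_eq_diagonal, diagonal_kronecker_diagonal, diagonal_kronecker_diagonal, ← diagonal_one,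
    diagonal_add, ← diagonal_smul, on234_diagonal, evenParity234_eq_diagonal]
  congr 1
  funext ⟨a₁, a₂, a₃, a₄⟩
  fin_cases a₂ <;> fin_cases a₃ <;> fin_cases a₄ <;> norm_num <;> decide

theorem R0_add_R3 :
    Rop 0 + Rop 3
        = mix4 0 (bellProj 0 + bellProj 3) + mix4 1 (bellProj 1 + bellProj 2) ∧
    Rop 0 + Rop 3 = on234 ((1 / 2 : ℂ) • (1 + σ3 ⊗ₖ (σ3 ⊗ₖ σ3))) ∧
    Rop 0 + Rop 3 = evenParity234 :=
  ⟨Rop_zero_add_Rop_three.trans mix4_bellProj_eq_evenParity234.symm,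
    Rop_zero_add_Rop_three.trans on234_σ3_eq_evenParity234.symm, Rop_zero_add_Rop_three⟩
end
end
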